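/- arXiv:2512.02597 — 3 statements merged into one kernel-verified Lean document; each statement's English description precedes it below -/
import Mathlib

section
/- Every flipped nonassociative Ore extension of a nonassociative ring R is a left generalized nonassociative Ore extension of R; in particular, it satisfies (Rx^m)(Rx^n) ⊆ R + Rx + ... + Rx^{m+n} for all m,n ∈ ℕ. -/
open Finset
open scoped Classical

section Defs

variable {R : Type*} {S : Type*}

/-- Iterated power: `pw x 0 = 1`, `pw x (n+1) = pw x n * x`. -/
def pw [One S] [Mul S] (x : S) : ℕ → S
  | 0 => 1
  | n + 1 => pw x n * x

/-- `x` is power-associative. -/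
def PowAssoc [One S] [Mul S] (x : S) : Prop := ∀ m n : ℕ, pw x m * pw x n = pw x (m + n)

variable [NonAssocRing R] [NonAssocRing S]

/-- Interpret a finitely supported coefficient family as a left polynomial `Σ f(cᵢ)·xⁱ`. -/
noncomputable def lpoly (f : R →+* S) (x : S) (c : ℕ →₀ R) : S :=
  c.sum fun i r => f r * pw x i

/-- Right polynomial `Σ xⁱ·f(cᵢ)`. -/
noncomputable def rpoly (f : R →+* S) (x : S) (c : ℕ →₀ R) : S :=
  c.sum fun i r => pw x i * f r

/-- Left degree (`⊥` plays the role of `-∞`), computed from a representation as a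
left polynomial in `x` (unique when `{1,x,x²,…}` is a left basis). -/
noncomputable def degl (f : R →+* S) (x : S) (p : S) : WithBot ℕ :=
  if h : ∃ c : ℕ →₀ R, lpoly f x c = p then (Classical.choose h).support.max else ⊥

/-- Left leading coefficient (`0` for the zero polynomial). -/
noncomputable def lcl (f : R →+* S) (x : S) (p : S) : R :=
  if h : ∃ c : ℕ →₀ R, lpoly f x c = p then
    (Classical.choose h) (WithBot.unbotD 0 (Classical.choose h).support.max) else 0

/-- Right degree. -/
noncomputable def degr (f : R →+* S) (x : S) (p : S) : WithBot ℕ :=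
  if h : ∃ c : ℕ →₀ R, rpoly f x c = p then (Classical.choose h).support.max else ⊥

/-- Right leading coefficient. -/
noncomputable def lcr (f : R →+* S) (x : S) (p : S) : R :=
  if h : ∃ c : ℕ →₀ R, rpoly f x c = p then
    (Classical.choose h) (WithBot.unbotD 0 (Classical.choose h).support.max) else 0

/-- `(S,x)` is a left generalized nonassociative Ore extension of `R`
(with the embedding `f : R →+* S`). -/
structure IsLeftGNOE (f : R →+* S) (x : S) : Prop where
  inj : Function.Injective f
  powAssoc : PowAssoc x
  basis : Function.Bijective (lpoly f x)
  closed : ∀ (m n : ℕ) (r s : R), ∃ c : ℕ →₀ R,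
    lpoly f x c = (f r * pw x m) * (f s * pw x n) ∧ ∀ i, m + n < i → c i = 0

/-- `(S,x)` is a right generalized nonassociative Ore extension of `R`. -/
structure IsRightGNOE (f : R →+* S) (x : S) : Prop where
  inj : Function.Injective f
  powAssoc : PowAssoc x
  basis : Function.Bijective (rpoly f x)
  closed : ∀ (m n : ℕ) (r s : R), ∃ c : ℕ →₀ R,
    rpoly f x c = (pw x m * f r) * (pw x n * f s) ∧ ∀ i, m + n < i → c i = 0

/-- Right ideal of a (nonassociative) ring. -/
def IsRightIdeal (T : Type*) [NonAssocRing T] (I : Set T) : Prop :=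
  (0 : T) ∈ I ∧ (∀ a b, a ∈ I → b ∈ I → a + b ∈ I) ∧ (∀ a, a ∈ I → -a ∈ I) ∧
    ∀ a t, a ∈ I → a * t ∈ I

/-- Left ideal of a (nonassociative) ring. -/
def IsLeftIdeal (T : Type*) [NonAssocRing T] (I : Set T) : Prop :=
  (0 : T) ∈ I ∧ (∀ a b, a ∈ I → b ∈ I → a + b ∈ I) ∧ (∀ a, a ∈ I → -a ∈ I) ∧
    ∀ a t, a ∈ I → t * a ∈ I

/-- The right ideal generated by a set. -/
def rIdealGen (T : Type*) [NonAssocRing T] (G : Set T) : Set T :=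
  ⋂₀ {I : Set T | IsRightIdeal T I ∧ G ⊆ I}

/-- The left ideal generated by a set. -/
def lIdealGen (T : Type*) [NonAssocRing T] (G : Set T) : Set T :=
  ⋂₀ {I : Set T | IsLeftIdeal T I ∧ G ⊆ I}

/-- Right Noetherian: every right ideal is finitely generated. -/
def RightNoeth (T : Type*) [NonAssocRing T] : Prop :=
  ∀ I : Set T, IsRightIdeal T I → ∃ G : Finset T, I = rIdealGen T ↑G

/-- Left Noetherian: every left ideal is finitely generated. -/
def LeftNoeth (T : Type*) [NonAssocRing T] : Prop :=
  ∀ I : Set T, IsLeftIdeal T I → ∃ G : Finset T, I = lIdealGen T ↑G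

/-- `M` is a right `R`-submodule of `S` (via `f`). -/
def IsRightRSub (f : R →+* S) (M : Set S) : Prop :=
  (0 : S) ∈ M ∧ (∀ a b, a ∈ M → b ∈ M → a + b ∈ M) ∧ (∀ a, a ∈ M → -a ∈ M) ∧
    ∀ a r, a ∈ M → a * f r ∈ M

/-- `M` is a left `R`-submodule of `S` (via `f`). -/
def IsLeftRSub (f : R →+* S) (M : Set S) : Prop :=
  (0 : S) ∈ M ∧ (∀ a b, a ∈ M → b ∈ M → a + b ∈ M) ∧ (∀ a, a ∈ M → -a ∈ M) ∧
    ∀ a r, a ∈ M → f r * a ∈ M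

/-- The right `R`-submodule of `S` generated by a set. -/
def rSubGen (f : R →+* S) (G : Set S) : Set S :=
  ⋂₀ {M : Set S | IsRightRSub f M ∧ G ⊆ M}

/-- `s` belongs to the right ideal of `S` generated by `p 0, …, p (n-1)` and admits a
left-degree-additive representation `s = Σⱼ (⋯((p_{iⱼ} s_{j1})s_{j2})⋯)s_{jm}` whose degree
bound `max_j (deg_l p_{iⱼ} + Σₖ deg_l s_{jk})` equals `deg_l s`. -/
def LDegAddMem (f : R →+* S) (x : S) {n : ℕ} (p : Fin n → S) (s : S) : Prop :=
  ∃ L : List (Fin n × List S),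
    s = (L.map fun t => t.2.foldl (· * ·) (p t.1)).sum ∧
    degl f x s
      = (L.map fun t => degl f x (p t.1) + (t.2.map (degl f x)).sum).foldr max ⊥

/-- `s` belongs to the left ideal of `S` generated by `p 0, …, p (n-1)` and admits a
right-degree-additive representation. -/
def RDegAddMem (f : R →+* S) (x : S) {n : ℕ} (p : Fin n → S) (s : S) : Prop :=
  ∃ L : List (Fin n × List S),
    s = (L.map fun t => t.2.foldl (fun b a => a * b) (p t.1)).sum ∧
    degr f x s
      = (L.map fun t => degr f x (p t.1) + (t.2.map (degr f x)).sum).foldr max ⊥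

/-- The left Euclidean division algorithm for `(S,x)` over `R`. -/
def LeftEDA (f : R →+* S) (x : S) : Prop :=
  ∀ (n : ℕ) (p : Fin n → S) (q : S), q ≠ 0 →
    (∀ i, degl f x (p i) ≤ degl f x q) →
    lcl f x q ∈ rIdealGen R (Set.range fun i => lcl f x (p i)) →
    ∃ s, LDegAddMem f x p s ∧ degl f x (q - s) < degl f x q

/-- The right Euclidean division algorithm for `(S,x)` over `R`. -/
def RightEDA (f : R →+* S) (x : S) : Prop :=
  ∀ (n : ℕ) (p : Fin n → S) (q : S), q ≠ 0 →
    (∀ i, degr f x (p i) ≤ degr f x q) →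
    lcr f x q ∈ lIdealGen R (Set.range fun i => lcr f x (p i)) →
    ∃ s, RDegAddMem f x p s ∧ degr f x (q - s) < degr f x q

/-- The maps `πᵢᵐ`: the sum of all `C(m,i)` compositions of `i` copies of `σ`
and `m - i` copies of `δ`. -/
def pimap (σ δ : R → R) : ℕ → ℕ → R → R
  | 0, 0 => id
  | _ + 1, 0 => fun _ => 0
  | 0, m + 1 => fun r => δ (pimap σ δ 0 m r)
  | i + 1, m + 1 => fun r => σ (pimap σ δ i m r) + δ (pimap σ δ (i + 1) m r)

/-- `(S,x)` realizes the generalized polynomial ring `R[X;σ,δ]`: `{1,x,x²,…}` is a left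
`R`-basis and multiplication is given by `(rxᵐ)(sxⁿ) = Σᵢ (r πᵢᵐ(s)) x^{i+n}`. -/
def IsGPolyRing (σ δ : R → R) (f : R →+* S) (x : S) : Prop :=
  Function.Injective f ∧ PowAssoc x ∧ Function.Bijective (lpoly f x) ∧
    ∀ (r s : R) (m n : ℕ),
      (f r * pw x m) * (f s * pw x n)
        = ∑ i ∈ Finset.range (m + 1), f (r * pimap σ δ i m s) * pw x (i + n)

/-- `(S,x)` realizes the flipped generalized polynomial ring `R[X;σ,δ]^fl`:
multiplication is given by `(rxᵐ)(sxⁿ) = Σᵢ τₙ(r, πᵢᵐ(s)) x^{i+n}`. -/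
def IsFlipGPolyRing (σ δ : R → R) (f : R →+* S) (x : S) : Prop :=
  Function.Injective f ∧ PowAssoc x ∧ Function.Bijective (lpoly f x) ∧
    ∀ (r s : R) (m n : ℕ),
      (f r * pw x m) * (f s * pw x n)
        = ∑ i ∈ Finset.range (m + 1),
            f (if Even n then r * pimap σ δ i m s else pimap σ δ i m s * r) * pw x (i + n)

end Defs

section AuxLemmas

variable {R : Type*} {S : Type*} [NonAssocRing R] [NonAssocRing S]

lemma lpoly_single (f : R →+* S) (x : S) (n : ℕ) (r : R) :
    lpoly f x (Finsupp.single n r) = f r * pw x n := by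
  simp [lpoly, Finsupp.sum_single_index]

lemma lpoly_add (f : R →+* S) (x : S) (c d : ℕ →₀ R) :
    lpoly f x (c + d) = lpoly f x c + lpoly f x d := by
  refine Finsupp.sum_add_index' ?_ ?_
  · intro i; simp
  · intro i a b; rw [map_add, add_mul]

end AuxLemmas

/-- every flipped nonassociative Ore extension is a left GNOE. -/
theorem stmt3 {R S : Type*} [NonAssocRing R] [NonAssocRing S] (f : R →+* S) (x : S) (σ δ : R → R)
    (hinj : Function.Injective f) (hpa : PowAssoc x) (hb : Function.Bijective (lpoly f x))
    (hσadd : ∀ a b : R, σ (a + b) = σ a + σ b) (hδadd : ∀ a b : R, δ (a + b) = δ a + δ b)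
    (hcomm : ∀ r : R, x * f r = f (σ r) * x + f (δ r))
    (hrec : ∀ (r s : R) (m n : ℕ),
      (f r * pw x (m + 1)) * (f s * pw x n)
        = ((f r * pw x m) * (f (σ s) * pw x n)) * x + (f r * pw x m) * (f (δ s) * pw x n))
    (htau : ∀ (r s : R) (n : ℕ),
      f r * (f s * pw x n) = f (if Even n then r * s else s * r) * pw x n) :
    IsLeftGNOE f x := by
  -- First, derive σ 1 = 1 and δ 1 = 0 from `hcomm` and injectivity of `lpoly`.
  have hx1 : x = f (σ 1) * x + f (δ 1) := by
    have h := hcomm 1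
    rwa [map_one, mul_one] at h
  have hσδ1 : σ 1 = 1 ∧ δ 1 = 0 := by
    have e1 : lpoly f x (Finsupp.single 1 (1 : R)) = x := by
      simp [lpoly_single, pw]
    have e2 : lpoly f x (Finsupp.single 1 (σ 1) + Finsupp.single 0 (δ 1)) = x := by
      rw [lpoly_add, lpoly_single, lpoly_single]
      simp only [pw, one_mul, mul_one]
      exact hx1.symm
    have heq := hb.injective (e1.trans e2.symm)
    constructor
    · have h1 := congrArg (fun c : ℕ →₀ R => c 1) heq
      simpa using h1.symm
    · have h0 := congrArg (fun c : ℕ →₀ R => c 0) heq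
      simpa using h0.symm
  -- Key identity: right multiplication by x raises the power.
  have hxmul : ∀ (r : R) (m : ℕ), (f r * pw x m) * x = f r * pw x (m + 1) := by
    intro r m
    have h := hrec r 1 m 0
    simp only [pw, hσδ1.1, hσδ1.2, map_one, map_zero, mul_one, zero_mul, mul_zero,
      add_zero] at h
    exact h.symm
  -- Shift lemma for lpoly.
  have hshift : ∀ c : ℕ →₀ R, lpoly f x c * x = lpoly f x (c.mapDomain Nat.succ) := by
    intro c
    have hrhs : lpoly f x (c.mapDomain Nat.succ) = c.sum fun i r => f r * pw x (i + 1) := by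
      rw [lpoly]
      exact Finsupp.sum_mapDomain_index (by simp) (by intro i a b; rw [map_add, add_mul])
    rw [hrhs, lpoly, Finsupp.sum_mul]
    exact Finsupp.sum_congr fun i _ => hxmul (c i) i
  refine ⟨hinj, hpa, hb, ?_⟩
  intro m
  induction m with
  | zero =>
    intro n r s
    refine ⟨Finsupp.single n (if Even n then r * s else s * r), ?_, ?_⟩
    · rw [lpoly_single, ← htau]
      simp [pw]
    · intro i hi
      exact Finsupp.single_eq_of_ne (by omega)
  | succ m ih =>
    intro n r s
    obtain ⟨c1, hc1, hb1⟩ := ih n r (σ s)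
    obtain ⟨c2, hc2, hb2⟩ := ih n r (δ s)
    refine ⟨c1.mapDomain Nat.succ + c2, ?_, ?_⟩
    · rw [lpoly_add, ← hshift, hc1, hc2, hrec]
    · intro i hi
      obtain ⟨j, rfl⟩ : ∃ j, i = j + 1 := ⟨i - 1, by omega⟩
      rw [Finsupp.add_apply, hb2 _ (by omega)]
      have hmd : (c1.mapDomain Nat.succ) (j + 1) = c1 j :=
        Finsupp.mapDomain_apply Nat.succ_injective c1 j
      rw [hmd, hb1 j (by omega), add_zero]
end

section
/- Let (S,x) be a left generalized nonassociative Ore extension of a nonassociative ring R that satisfies the left Euclidean division algorithm. If R is right Noetherian, then S is right Noetherian. -/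
open Finset
open scoped Classical

section Aux

variable {T : Type*} [NonAssocRing T]

lemma isRightIdeal_rIdealGen (G : Set T) : IsRightIdeal T (rIdealGen T G) := by
  refine ⟨?_, ?_, ?_, ?_⟩
  · intro I hI; exact hI.1.1
  · intro a b ha hb I hI; exact hI.1.2.1 a b (ha I hI) (hb I hI)
  · intro a ha I hI; exact hI.1.2.2.1 a (ha I hI)
  · intro a t ha I hI; exact hI.1.2.2.2 a t (ha I hI)

lemma subset_rIdealGen (G : Set T) : G ⊆ rIdealGen T G := by
  intro g hg I hI; exact hI.2 hg

lemma rIdealGen_subset {G I : Set T} (hI : IsRightIdeal T I) (h : G ⊆ I) :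
    rIdealGen T G ⊆ I := fun _ ha => ha I ⟨hI, h⟩

lemma rIdealGen_mono {G H : Set T} (h : G ⊆ H) : rIdealGen T G ⊆ rIdealGen T H :=
  rIdealGen_subset (isRightIdeal_rIdealGen H) (h.trans (subset_rIdealGen H))

/-- Every element of `rIdealGen T X` lies in `rIdealGen T F` for some finite `F ⊆ X`. -/
lemma rIdealGen_exists_finset {X : Set T} {a : T} (ha : a ∈ rIdealGen T X) :
    ∃ F : Finset T, ↑F ⊆ X ∧ a ∈ rIdealGen T (↑F : Set T) := by
  have hmem : a ∈ {a : T | ∃ F : Finset T, ↑F ⊆ X ∧ a ∈ rIdealGen T (↑F : Set T)} := by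
    refine ha _ ⟨⟨?_, ?_, ?_, ?_⟩, ?_⟩
    · exact ⟨∅, by simp, (isRightIdeal_rIdealGen _).1⟩
    · rintro a b ⟨F₁, hF₁, ha⟩ ⟨F₂, hF₂, hb⟩
      refine ⟨F₁ ∪ F₂, by simp [Set.union_subset_iff, hF₁, hF₂], ?_⟩
      exact (isRightIdeal_rIdealGen _).2.1 a b
        (rIdealGen_mono (by simp [Finset.coe_subset]) ha)
        (rIdealGen_mono (by simp [Finset.coe_subset]) hb)
    · rintro a ⟨F, hF, ha⟩; exact ⟨F, hF, (isRightIdeal_rIdealGen _).2.2.1 a ha⟩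
    · rintro a t ⟨F, hF, ha⟩; exact ⟨F, hF, (isRightIdeal_rIdealGen _).2.2.2 a t ha⟩
    · intro g hg
      exact ⟨{g}, by simpa using hg, subset_rIdealGen _ (by simp)⟩
  exact hmem

/-- Noetherianity: every generated ideal is generated by a finite subset of generators. -/
lemma noeth_finite_subgen (hR : RightNoeth T) (X : Set T) :
    ∃ F : Finset T, ↑F ⊆ X ∧ rIdealGen T X = rIdealGen T (↑F : Set T) := by
  obtain ⟨G, hG⟩ := hR (rIdealGen T X) (isRightIdeal_rIdealGen X)
  have hGsub : (↑G : Set T) ⊆ rIdealGen T X := hG ▸ subset_rIdealGen _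
  have hch : ∀ g : T, g ∈ rIdealGen T X →
      ∃ F : Finset T, ↑F ⊆ X ∧ g ∈ rIdealGen T (↑F : Set T) := fun g hg =>
    rIdealGen_exists_finset hg
  classical
  choose Fg hFg1 hFg2 using hch
  refine ⟨G.attach.biUnion (fun g => Fg g (hGsub g.2)), ?_, ?_⟩
  · intro r hr
    simp only [Finset.coe_biUnion, Set.mem_iUnion, Finset.mem_coe] at hr
    obtain ⟨g, hg, hr⟩ := hr
    exact hFg1 _ _ hr
  · apply le_antisymm
    · rw [hG]
      refine rIdealGen_subset (isRightIdeal_rIdealGen _) ?_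
      intro g hg
      refine rIdealGen_mono ?_ (hFg2 g (hGsub hg))
      intro r hr
      simp only [Finset.coe_biUnion, Set.mem_iUnion, Finset.mem_coe]
      exact ⟨⟨g, hg⟩, Finset.mem_attach _ _, hr⟩
    · apply rIdealGen_mono
      intro r hr
      simp only [Finset.coe_biUnion, Set.mem_iUnion, Finset.mem_coe] at hr
      obtain ⟨g, hg, hr⟩ := hr
      exact hFg1 _ _ hr

/-- Ascending chains of right ideals stabilize. -/
lemma noeth_chain (hR : RightNoeth T) (A : ℕ → Set T)
    (hI : ∀ n, IsRightIdeal T (A n)) (hmono : ∀ m n, m ≤ n → A m ⊆ A n) :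
    ∃ N, ∀ n, N ≤ n → A n = A N := by
  classical
  set U : Set T := ⋃ n, A n with hU
  have hUideal : IsRightIdeal T U := by
    refine ⟨Set.mem_iUnion.2 ⟨0, (hI 0).1⟩, ?_, ?_, ?_⟩
    · rintro a b ha hb
      obtain ⟨m, hm⟩ := Set.mem_iUnion.1 ha
      obtain ⟨n, hn⟩ := Set.mem_iUnion.1 hb
      exact Set.mem_iUnion.2 ⟨max m n, (hI _).2.1 a b
        (hmono _ _ (le_max_left _ _) hm) (hmono _ _ (le_max_right _ _) hn)⟩
    · rintro a ha
      obtain ⟨m, hm⟩ := Set.mem_iUnion.1 ha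
      exact Set.mem_iUnion.2 ⟨m, (hI m).2.2.1 a hm⟩
    · rintro a t ha
      obtain ⟨m, hm⟩ := Set.mem_iUnion.1 ha
      exact Set.mem_iUnion.2 ⟨m, (hI m).2.2.2 a t hm⟩
  obtain ⟨G, hG⟩ := hR U hUideal
  have hGsub : (↑G : Set T) ⊆ U := hG ▸ subset_rIdealGen _
  have hch : ∀ g : T, g ∈ U → ∃ n, g ∈ A n := fun g hg => Set.mem_iUnion.1 hg
  choose ind hind using hch
  refine ⟨G.attach.sup (fun g => ind g (hGsub g.2)), ?_⟩
  intro n hn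
  apply le_antisymm
  · intro a ha
    have haU : a ∈ U := Set.mem_iUnion.2 ⟨n, ha⟩
    have : U ⊆ A (G.attach.sup (fun g => ind g (hGsub g.2))) := by
      rw [hG]
      refine rIdealGen_subset (hI _) ?_
      intro g hg
      exact hmono _ _ (Finset.le_sup (Finset.mem_attach _ ⟨g, hg⟩)) (hind g (hGsub hg))
    exact this haU
  · exact hmono _ _ hn

lemma foldl_mem_rightIdeal {J : Set T} (hJ : IsRightIdeal T J) :
    ∀ (l : List T) {a : T}, a ∈ J → l.foldl (· * ·) a ∈ J
  | [], _, ha => ha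
  | (t :: l), a, ha => foldl_mem_rightIdeal hJ l (hJ.2.2.2 a t ha)

lemma list_sum_mem_rightIdeal {J : Set T} (hJ : IsRightIdeal T J) :
    ∀ (l : List T), (∀ a ∈ l, a ∈ J) → l.sum ∈ J
  | [], _ => by simpa using hJ.1
  | (a :: l), h => by
      rw [List.sum_cons]
      exact hJ.2.1 _ _ (h a (by simp)) (list_sum_mem_rightIdeal hJ l fun b hb => h b (by simp [hb]))

end Aux

section DegAux

variable {R S : Type*} [NonAssocRing R] [NonAssocRing S]

lemma lpoly_zero (f : R →+* S) (x : S) : lpoly f x 0 = 0 := by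
  simp [lpoly]

lemma degl_ne_bot {f : R →+* S} {x : S} (hb : Function.Bijective (lpoly f x))
    {q : S} (hq : q ≠ 0) : degl f x q ≠ ⊥ := by
  have h : ∃ c : ℕ →₀ R, lpoly f x c = q := hb.2 q
  rw [degl, dif_pos h]
  intro hmax
  have hsupp : (Classical.choose h).support = ∅ := Finset.max_eq_bot.1 hmax
  have hc0 : Classical.choose h = 0 := Finsupp.support_eq_empty.1 hsupp
  have := Classical.choose_spec h
  rw [hc0, lpoly_zero] at this
  exact hq this.symm

end DegAux

/-- Hilbert's Basis Theorem for left GNOEs with left Euclidean division. -/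
theorem stmt10 {R S : Type*} [NonAssocRing R] [NonAssocRing S] (f : R →+* S) (x : S)
    (h : IsLeftGNOE f x) (hED : LeftEDA f x)
    (hR : RightNoeth R) : RightNoeth S := by
  classical
  intro I hI
  -- sets of leading coefficients of elements of `I` of degree ≤ m
  set X : ℕ → Set R := fun m =>
    {r : R | ∃ p, p ∈ I ∧ degl f x p ≤ (m : WithBot ℕ) ∧ lcl f x p = r} with hX
  set A : ℕ → Set R := fun m => rIdealGen R (X m) with hA
  have hAideal : ∀ m, IsRightIdeal R (A m) := fun m => isRightIdeal_rIdealGen _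
  have hXmono : ∀ m n : ℕ, m ≤ n → X m ⊆ X n := by
    rintro m n hmn r ⟨p, hp, hd, hl⟩
    exact ⟨p, hp, hd.trans (by exact_mod_cast hmn), hl⟩
  have hAmono : ∀ m n : ℕ, m ≤ n → A m ⊆ A n := fun m n hmn =>
    rIdealGen_mono (hXmono m n hmn)
  -- choose finite generating sets of leading coefficients
  have hfin : ∀ m : ℕ, ∃ F : Finset R, ↑F ⊆ X m ∧ A m = rIdealGen R (↑F : Set R) :=
    fun m => noeth_finite_subgen hR (X m)
  choose F hF1 hF2 using hfin
  -- choose polynomials realizing the leading coefficients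
  set pol : ℕ → R → S := fun m r =>
    if h : ∃ p, p ∈ I ∧ degl f x p ≤ (m : WithBot ℕ) ∧ lcl f x p = r
    then Classical.choose h else 0 with hpol
  have hpolmem : ∀ m : ℕ, ∀ r ∈ F m, pol m r ∈ I ∧
      degl f x (pol m r) ≤ (m : WithBot ℕ) ∧ lcl f x (pol m r) = r := by
    intro m r hr
    have hrX : ∃ p, p ∈ I ∧ degl f x p ≤ (m : WithBot ℕ) ∧ lcl f x p = r := hF1 m hr
    simp only [hpol, dif_pos hrX]
    exact Classical.choose_spec hrX
  set P : ℕ → Finset S := fun m => (F m).image (pol m) with hP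
  have hPmem : ∀ m : ℕ, ∀ s ∈ P m, s ∈ I ∧ degl f x s ≤ (m : WithBot ℕ) := by
    intro m s hs
    obtain ⟨r, hr, rfl⟩ := Finset.mem_image.1 hs
    exact ⟨(hpolmem m r hr).1, (hpolmem m r hr).2.1⟩
  have hAgen : ∀ m : ℕ, A m ⊆ rIdealGen R (lcl f x '' ↑(P m)) := by
    intro m
    rw [hF2 m]
    apply rIdealGen_mono
    intro r hr
    exact ⟨pol m r, Finset.mem_coe.2 (Finset.mem_image.2 ⟨r, hr, rfl⟩), (hpolmem m r hr).2.2⟩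
  -- chain stabilizes
  obtain ⟨N, hN⟩ := noeth_chain hR A hAideal hAmono
  -- global generating set
  set G : Finset S := (Finset.range (N + 1)).biUnion P with hG
  set J : Set S := rIdealGen S ↑G with hJ
  have hJideal : IsRightIdeal S J := isRightIdeal_rIdealGen _
  have hGI : (↑G : Set S) ⊆ I := by
    intro s hs
    obtain ⟨m, _, hs⟩ := Finset.mem_biUnion.1 (Finset.mem_coe.1 hs)
    exact (hPmem m s hs).1
  have hJI : J ⊆ I := rIdealGen_subset hI hGI
  refine ⟨G, ?_⟩
  apply Set.Subset.antisymm _ hJI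
  -- main induction on degree
  have main : ∀ n : ℕ, ∀ q, q ∈ I → degl f x q ≤ (n : WithBot ℕ) → q ∈ J := by
    intro n
    induction n using Nat.strong_induction_on with
    | _ n ih =>
      intro q hq hdq
      by_cases hq0 : q = 0
      · rw [hq0]; exact hJideal.1
      · obtain ⟨d, hd⟩ := WithBot.ne_bot_iff_exists.1 (degl_ne_bot h.basis hq0)
        have hd : degl f x q = (d : WithBot ℕ) := hd.symm
        have hdn : d ≤ n := by rw [hd] at hdq; exact_mod_cast hdq
        set m : ℕ := min d N with hm
        -- the divisors
        set p : Fin (P m).card → S := fun i => ((P m).equivFin.symm i : S) with hp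
        have hpP : ∀ i, p i ∈ P m := fun i => ((P m).equivFin.symm i).2
        have hdeg : ∀ i, degl f x (p i) ≤ degl f x q := by
          intro i
          refine (hPmem m _ (hpP i)).2.trans ?_
          rw [hd]
          exact_mod_cast min_le_left d N
        have hAdm : A d = A m := by
          rcases le_or_gt d N with hle | hlt
          · rw [hm, min_eq_left hle]
          · rw [hm, min_eq_right hlt.le, hN d hlt.le]
        have hlc : lcl f x q ∈ rIdealGen R (Set.range fun i => lcl f x (p i)) := by
          have h1 : lcl f x q ∈ X d := ⟨q, hq, hd.le, rfl⟩
          have h2 : lcl f x q ∈ A m := hAdm ▸ subset_rIdealGen _ h1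
          refine (hAgen m).trans (rIdealGen_mono ?_) h2
          rintro r ⟨s, hs, rfl⟩
          exact ⟨(P m).equivFin ⟨s, Finset.mem_coe.1 hs⟩, by simp [hp]⟩
        obtain ⟨s, ⟨L, hLsum, _⟩, hlt⟩ := hED _ p q hq0 hdeg hlc
        have hsJ : s ∈ J := by
          rw [hLsum]
          refine list_sum_mem_rightIdeal hJideal _ ?_
          intro a ha
          obtain ⟨t, _, rfl⟩ := List.mem_map.1 ha
          refine foldl_mem_rightIdeal hJideal _ ?_
          refine subset_rIdealGen _ ?_
          refine Finset.mem_coe.2 (Finset.mem_biUnion.2 ⟨m, ?_, hpP t.1⟩)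
          exact Finset.mem_range.2 (Nat.lt_succ_of_le (min_le_right d N))
        have hqs : q - s ∈ I := by
          have := hI.2.1 q (-s) hq (hI.2.2.1 s (hJI hsJ))
          simpa [sub_eq_add_neg] using this
        by_cases hqs0 : q - s = 0
        · rw [sub_eq_zero.1 hqs0]; exact hsJ
        · obtain ⟨d', hd'⟩ := WithBot.ne_bot_iff_exists.1 (degl_ne_bot h.basis hqs0)
          have hd' : degl f x (q - s) = (d' : WithBot ℕ) := hd'.symm
          have hd'd : d' < d := by
            rw [hd', hd] at hlt; exact_mod_cast hlt
          have : q - s ∈ J := ih d' (lt_of_lt_of_le hd'd hdn) (q - s) hqs hd'.le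
          have hsum : q = (q - s) + s := by abel
          rw [hsum]
          exact hJideal.2.1 _ _ this hsJ
  intro q hq
  by_cases hq0 : q = 0
  · rw [hq0]; exact hJideal.1
  · obtain ⟨d, hd⟩ := WithBot.ne_bot_iff_exists.1 (degl_ne_bot h.basis hq0)
    exact main d q hq hd.symm.le
end

section
/- Let R be a nonassociative ring with an additive surjection σ and an additive map δ satisfying σ(1)=1 and δ(1)=0. If R is right Noetherian, then the generalized polynomial ring R[X;σ,δ] is right Noetherian. -/
open Finset
open scoped Classical

section MyAux

variable {R S : Type*} [NonAssocRing R] [NonAssocRing S]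

lemma my_addmap_zero {g : R → R} (h : ∀ a b : R, g (a + b) = g a + g b) : g 0 = 0 := by
  have h0 := h 0 0
  rw [add_zero] at h0
  exact (left_eq_add (a := g 0) (b := g 0)).mp h0

lemma my_pimap_gt (σ δ : R → R) (hσ0 : σ 0 = 0) (hδ0 : δ 0 = 0) :
    ∀ m i : ℕ, m < i → ∀ r : R, pimap σ δ i m r = 0 := by
  intro m
  induction m with
  | zero =>
    intro i hi r
    match i, hi with
    | i + 1, _ => rfl
  | succ m ih =>
    intro i hi r
    match i, hi with
    | i + 1, hi =>
      show σ (pimap σ δ i m r) + δ (pimap σ δ (i + 1) m r) = 0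
      rw [ih i (by omega) r, ih (i + 1) (by omega) r, hσ0, hδ0, add_zero]

lemma my_pimap_diag (σ δ : R → R) (hσ0 : σ 0 = 0) (hδ0 : δ 0 = 0) :
    ∀ (m : ℕ) (r : R), pimap σ δ m m r = σ^[m] r := by
  intro m
  induction m with
  | zero => intro r; rfl
  | succ m ih =>
    intro r
    show σ (pimap σ δ m m r) + δ (pimap σ δ (m + 1) m r) = σ^[m + 1] r
    rw [ih r, my_pimap_gt σ δ hσ0 hδ0 m (m + 1) (Nat.lt_succ_self m) r, hδ0, add_zero,
      Function.iterate_succ_apply']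

lemma my_pimap_one (σ δ : R → R) (hσ0 : σ 0 = 0) (hδ0 : δ 0 = 0) (hσ1 : σ 1 = 1)
    (hδ1 : δ 1 = 0) : ∀ m i : ℕ, pimap σ δ i m (1 : R) = if i = m then 1 else 0 := by
  intro m
  induction m with
  | zero =>
    intro i
    match i with
    | 0 => simp; rfl
    | i + 1 => show (0 : R) = if i + 1 = 0 then 1 else 0; simp
  | succ m ih =>
    intro i
    match i with
    | 0 =>
      show δ (pimap σ δ 0 m (1 : R)) = _
      rw [ih 0]
      rcases eq_or_ne 0 m with h | h
      · subst h; simp [hδ1]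
      · rw [if_neg h, hδ0, if_neg (show (0 : ℕ) ≠ m + 1 by omega)]
    | i + 1 =>
      show σ (pimap σ δ i m (1 : R)) + δ (pimap σ δ (i + 1) m (1 : R)) = _
      rw [ih i, ih (i + 1)]
      rcases eq_or_ne i m with h | h
      · subst h
        rw [if_pos rfl, if_neg (show i + 1 ≠ i by omega), hσ1, hδ0, add_zero,
          if_pos rfl]
      · rw [if_neg h, hσ0, zero_add, if_neg (show i + 1 ≠ m + 1 by omega)]
        rcases eq_or_ne (i + 1) m with h2 | h2
        · rw [if_pos h2, hδ1]
        · rw [if_neg h2, hδ0]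

/-- `lpoly` as an additive monoid hom. -/
noncomputable def myL (f : R →+* S) (x : S) : (ℕ →₀ R) →+ S where
  toFun := lpoly f x
  map_zero' := Finsupp.sum_zero_index
  map_add' c c' := by
    show lpoly f x (c + c') = lpoly f x c + lpoly f x c'
    simp only [lpoly]
    exact Finsupp.sum_add_index' (fun i => by simp) (fun i b₁ b₂ => by simp [add_mul])

lemma myL_eq (f : R →+* S) (x : S) (c : ℕ →₀ R) : myL f x c = lpoly f x c := rfl

lemma myL_single (f : R →+* S) (x : S) (i : ℕ) (r : R) :
    myL f x (Finsupp.single i r) = f r * pw x i := by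
  show lpoly f x (Finsupp.single i r) = f r * pw x i
  simp only [lpoly]
  exact Finsupp.sum_single_index (by simp)

/-- The coefficient map: inverse of `lpoly`. -/
noncomputable def myco (f : R →+* S) (x : S) (hbij : Function.Bijective (lpoly f x)) :
    S → (ℕ →₀ R) := (Equiv.ofBijective (lpoly f x) hbij).symm

lemma myco_lpoly (f : R →+* S) (x : S) (hbij : Function.Bijective (lpoly f x)) (c : ℕ →₀ R) :
    myco f x hbij (lpoly f x c) = c :=
  (Equiv.ofBijective (lpoly f x) hbij).symm_apply_apply c

lemma lpoly_myco (f : R →+* S) (x : S) (hbij : Function.Bijective (lpoly f x)) (p : S) :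
    lpoly f x (myco f x hbij p) = p :=
  (Equiv.ofBijective (lpoly f x) hbij).apply_symm_apply p

lemma myco_zero (f : R →+* S) (x : S) (hbij : Function.Bijective (lpoly f x)) :
    myco f x hbij 0 = 0 := by
  have : lpoly f x 0 = 0 := (myL f x).map_zero
  rw [← this, myco_lpoly]

lemma myco_sub (f : R →+* S) (x : S) (hbij : Function.Bijective (lpoly f x)) (p q : S) :
    myco f x hbij (p - q) = myco f x hbij p - myco f x hbij q := by
  have : lpoly f x (myco f x hbij p - myco f x hbij q) = p - q := by
    rw [← myL_eq, map_sub, myL_eq, myL_eq, lpoly_myco, lpoly_myco]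
  rw [← this, myco_lpoly]

lemma myco_add (f : R →+* S) (x : S) (hbij : Function.Bijective (lpoly f x)) (p q : S) :
    myco f x hbij (p + q) = myco f x hbij p + myco f x hbij q := by
  have : lpoly f x (myco f x hbij p + myco f x hbij q) = p + q := by
    rw [← myL_eq, map_add, myL_eq, myL_eq, lpoly_myco, lpoly_myco]
  rw [← this, myco_lpoly]

section Prod

variable (f : R →+* S) (x : S) (σ δ : R → R)
variable (hmul : ∀ (r s : R) (m n : ℕ),
    (f r * pw x m) * (f s * pw x n)
      = ∑ i ∈ Finset.range (m + 1), f (r * pimap σ δ i m s) * pw x (i + n))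

include hmul

lemma my_key_const (c : ℕ →₀ R) (t : R) :
    lpoly f x c * f t
      = myL f x (c.sum fun i r => ∑ i' ∈ Finset.range (i + 1),
          Finsupp.single i' (r * pimap σ δ i' i t)) := by
  rw [Finsupp.sum, map_sum]
  show (c.sum fun i r => f r * pw x i) * f t = _
  rw [Finsupp.sum, Finset.sum_mul]
  refine Finset.sum_congr rfl fun i hi => ?_
  rw [map_sum]
  calc (f (c i) * pw x i) * f t = (f (c i) * pw x i) * (f t * pw x 0) := by
        rw [show pw x 0 = 1 from rfl, mul_one]
    _ = ∑ i' ∈ Finset.range (i + 1), f (c i * pimap σ δ i' i t) * pw x (i' + 0) := hmul _ _ _ _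
    _ = _ := by
        refine Finset.sum_congr rfl fun i' _ => ?_
        rw [myL_single, add_zero]

lemma my_key_pw (hσ0 : σ 0 = 0) (hδ0 : δ 0 = 0) (hσ1 : σ 1 = 1) (hδ1 : δ 1 = 0)
    (c : ℕ →₀ R) (e : ℕ) :
    lpoly f x c * pw x e = myL f x (c.sum fun i r => Finsupp.single (i + e) r) := by
  rw [Finsupp.sum, map_sum]
  show (c.sum fun i r => f r * pw x i) * pw x e = _
  rw [Finsupp.sum, Finset.sum_mul]
  refine Finset.sum_congr rfl fun i hi => ?_
  calc (f (c i) * pw x i) * pw x e = (f (c i) * pw x i) * (f 1 * pw x e) := by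
        rw [map_one, one_mul]
    _ = ∑ i' ∈ Finset.range (i + 1), f (c i * pimap σ δ i' i 1) * pw x (i' + e) := hmul _ _ _ _
    _ = f (c i) * pw x (i + e) := by
        rw [Finset.sum_eq_single i]
        · rw [my_pimap_one σ δ hσ0 hδ0 hσ1 hδ1, if_pos rfl, mul_one]
        · intro b _ hb
          rw [my_pimap_one σ δ hσ0 hδ0 hσ1 hδ1, if_neg hb, mul_zero, map_zero, zero_mul]
        · intro h; exact absurd (Finset.self_mem_range_succ i) h
    _ = _ := (myL_single f x (i + e) (c i)).symm

lemma my_coeff_mul_const (hσ0 : σ 0 = 0) (hδ0 : δ 0 = 0)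
    (hbij : Function.Bijective (lpoly f x)) (p : S) (t : R) (n : ℕ)
    (hhigh : ∀ j, n < j → myco f x hbij p j = 0) :
    myco f x hbij (p * f t) n = myco f x hbij p n * σ^[n] t ∧
      ∀ j, n < j → myco f x hbij (p * f t) j = 0 := by
  set c := myco f x hbij p with hc
  have hp : lpoly f x c = p := lpoly_myco f x hbij p
  have hkey : p * f t = lpoly f x (c.sum fun i r => ∑ i' ∈ Finset.range (i + 1),
      Finsupp.single i' (r * pimap σ δ i' i t)) := by
    rw [← hp, my_key_const f x σ δ hmul c t, myL_eq]
  have hcoeq : myco f x hbij (p * f t) = c.sum fun i r => ∑ i' ∈ Finset.range (i + 1),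
      Finsupp.single i' (r * pimap σ δ i' i t) := by
    rw [hkey, myco_lpoly]
  have hsupp : ∀ i ∈ c.support, i ≤ n := fun i hi => by
    by_contra h
    exact Finsupp.mem_support_iff.1 hi (hhigh i (lt_of_not_ge h))
  have happ : ∀ j, (c.sum fun i r => ∑ i' ∈ Finset.range (i + 1),
      Finsupp.single i' (r * pimap σ δ i' i t)) j
        = ∑ i ∈ c.support, if j ≤ i then c i * pimap σ δ j i t else 0 := by
    intro j
    rw [Finsupp.sum, Finsupp.finset_sum_apply]
    refine Finset.sum_congr rfl fun i hi => ?_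
    rw [Finsupp.finset_sum_apply]
    simp only [Finsupp.single_apply]
    rw [Finset.sum_ite_eq' (Finset.range (i + 1)) j]
    simp [Nat.lt_succ_iff]
  constructor
  · rw [hcoeq, happ n, Finset.sum_eq_single n]
    · rw [if_pos le_rfl, my_pimap_diag σ δ hσ0 hδ0]
    · intro b hb hne
      have hble := hsupp b hb
      rw [if_neg fun hnb => hne (le_antisymm hble hnb)]
    · intro hn
      rw [if_pos le_rfl, Finsupp.notMem_support_iff.1 hn, zero_mul]
  · intro j hj
    rw [hcoeq, happ j]
    refine Finset.sum_eq_zero fun i hi => ?_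
    rw [if_neg (not_le.2 (lt_of_le_of_lt (hsupp i hi) hj))]

lemma my_coeff_mul_pw (hσ0 : σ 0 = 0) (hδ0 : δ 0 = 0) (hσ1 : σ 1 = 1) (hδ1 : δ 1 = 0)
    (hbij : Function.Bijective (lpoly f x)) (p : S) (e m : ℕ)
    (hhigh : ∀ j, m < j → myco f x hbij p j = 0) :
    myco f x hbij (p * pw x e) (m + e) = myco f x hbij p m ∧
      ∀ j, m + e < j → myco f x hbij (p * pw x e) j = 0 := by
  set c := myco f x hbij p with hc
  have hp : lpoly f x c = p := lpoly_myco f x hbij p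
  have hkey : p * pw x e = lpoly f x (c.sum fun i r => Finsupp.single (i + e) r) := by
    rw [← hp, my_key_pw f x σ δ hmul hσ0 hδ0 hσ1 hδ1 c e, myL_eq]
  have hcoeq : myco f x hbij (p * pw x e) = c.sum fun i r => Finsupp.single (i + e) r := by
    rw [hkey, myco_lpoly]
  have hsupp : ∀ i ∈ c.support, i ≤ m := fun i hi => by
    by_contra h
    exact Finsupp.mem_support_iff.1 hi (hhigh i (lt_of_not_ge h))
  have happ : ∀ j, (c.sum fun i r => Finsupp.single (i + e) r) j
      = ∑ i ∈ c.support, if i + e = j then c i else 0 := by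
    intro j
    rw [Finsupp.sum, Finsupp.finset_sum_apply]
    refine Finset.sum_congr rfl fun i hi => ?_
    rw [Finsupp.single_apply]
  constructor
  · rw [hcoeq, happ (m + e), Finset.sum_eq_single m]
    · rw [if_pos rfl]
    · intro b hb hne
      rw [if_neg fun hb2 => hne (Nat.add_right_cancel hb2)]
    · intro hm
      rw [if_pos rfl, Finsupp.notMem_support_iff.1 hm]
  · intro j hj
    rw [hcoeq, happ j]
    refine Finset.sum_eq_zero fun i hi => ?_
    have : i + e < j := lt_of_le_of_lt (Nat.add_le_add_right (hsupp i hi) e) hj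
    rw [if_neg (Nat.ne_of_lt this)]

end Prod

lemma my_subset_rIdealGen {T : Type*} [NonAssocRing T] (G : Set T) : G ⊆ rIdealGen T G :=
  fun g hg => Set.mem_sInter.2 fun _ hI => hI.2 hg

lemma my_rIdealGen_subset {T : Type*} [NonAssocRing T] {G I : Set T} (hI : IsRightIdeal T I)
    (hGI : G ⊆ I) : rIdealGen T G ⊆ I :=
  fun _ ha => Set.mem_sInter.1 ha I ⟨hI, hGI⟩

lemma my_isRightIdeal_rIdealGen {T : Type*} [NonAssocRing T] (G : Set T) :
    IsRightIdeal T (rIdealGen T G) := by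
  refine ⟨?_, ?_, ?_, ?_⟩
  · exact Set.mem_sInter.2 fun I hI => hI.1.1
  · intro a b ha hb
    exact Set.mem_sInter.2 fun I hI =>
      hI.1.2.1 a b (Set.mem_sInter.1 ha I hI) (Set.mem_sInter.1 hb I hI)
  · intro a ha
    exact Set.mem_sInter.2 fun I hI => hI.1.2.2.1 a (Set.mem_sInter.1 ha I hI)
  · intro a t ha
    exact Set.mem_sInter.2 fun I hI => hI.1.2.2.2 a t (Set.mem_sInter.1 ha I hI)

end MyAux

/-- if `R` is right Noetherian and `σ` is an additive surjection, then
`R[X;σ,δ]` is right Noetherian. -/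
theorem stmt13 {R S : Type*} [NonAssocRing R] [NonAssocRing S] (f : R →+* S) (x : S) (σ δ : R → R)
    (hσadd : ∀ a b : R, σ (a + b) = σ a + σ b) (hδadd : ∀ a b : R, δ (a + b) = δ a + δ b)
    (hσ1 : σ 1 = 1) (hδ1 : δ 1 = 0)
    (hσsurj : Function.Surjective σ)
    (hpoly : IsGPolyRing σ δ f x)
    (hR : RightNoeth R) : RightNoeth S := by
  obtain ⟨hinj, hpa, hbij, hmul⟩ := hpoly
  have hσ0 : σ 0 = 0 := my_addmap_zero hσadd
  have hδ0 : δ 0 = 0 := my_addmap_zero hδadd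
  intro I hI
  set co := myco f x hbij with hcodef
  have hIsub : ∀ a b : S, a ∈ I → b ∈ I → a - b ∈ I := fun a b ha hb => by
    rw [sub_eq_add_neg]; exact hI.2.1 _ _ ha (hI.2.2.1 _ hb)
  -- the coefficient modules
  set L : ℕ → Set R := fun n => {a | ∃ p, p ∈ I ∧ (∀ j, n < j → co p j = 0) ∧ co p n = a}
    with hLdef
  have hLid : ∀ n, IsRightIdeal R (L n) := by
    intro n
    refine ⟨⟨0, hI.1, ?_, ?_⟩, ?_, ?_, ?_⟩
    · intro j _; rw [hcodef, myco_zero]; rfl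
    · rw [hcodef, myco_zero]; rfl
    · rintro a b ⟨p, hpI, hph, hpt⟩ ⟨q, hqI, hqh, hqt⟩
      refine ⟨p + q, hI.2.1 _ _ hpI hqI, ?_, ?_⟩
      · intro j hj
        rw [hcodef, myco_add f x hbij]
        show co p j + co q j = 0
        rw [hph j hj, hqh j hj, add_zero]
      · rw [hcodef, myco_add f x hbij]
        show co p n + co q n = a + b
        rw [hpt, hqt]
    · rintro a ⟨p, hpI, hph, hpt⟩
      refine ⟨0 - p, hIsub _ _ hI.1 hpI, ?_, ?_⟩
      · intro j hj
        rw [hcodef, myco_sub f x hbij, myco_zero]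
        show (0 : ℕ →₀ R) j - co p j = 0
        rw [hph j hj]; simp
      · rw [hcodef, myco_sub f x hbij, myco_zero]
        show (0 : ℕ →₀ R) n - co p n = -a
        rw [hpt]; simp
    · rintro a t ⟨p, hpI, hph, hpt⟩
      obtain ⟨t', ht'⟩ := (hσsurj.iterate n) t
      obtain ⟨h1, h2⟩ := my_coeff_mul_const f x σ δ hmul hσ0 hδ0 hbij p t' n hph
      exact ⟨p * f t', hI.2.2.2 _ _ hpI, h2, by rw [h1, hpt, ht']⟩
  have hLmono : Monotone L := by
    apply monotone_nat_of_le_succ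
    rintro n a ⟨p, hpI, hph, hpt⟩
    obtain ⟨h1, h2⟩ := my_coeff_mul_pw f x σ δ hmul hσ0 hδ0 hσ1 hδ1 hbij p 1 n hph
    exact ⟨p * pw x 1, hI.2.2.2 _ _ hpI, h2, by rw [h1, hpt]⟩
  set U : Set R := ⋃ n, L n with hUdef
  have hUid : IsRightIdeal R U := by
    refine ⟨Set.mem_iUnion.2 ⟨0, (hLid 0).1⟩, ?_, ?_, ?_⟩
    · intro a b ha hb
      obtain ⟨i, hai⟩ := Set.mem_iUnion.1 ha
      obtain ⟨j, hbj⟩ := Set.mem_iUnion.1 hb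
      exact Set.mem_iUnion.2 ⟨max i j, (hLid _).2.1 a b
        (hLmono (le_max_left i j) hai) (hLmono (le_max_right i j) hbj)⟩
    · intro a ha
      obtain ⟨i, hai⟩ := Set.mem_iUnion.1 ha
      exact Set.mem_iUnion.2 ⟨i, (hLid i).2.2.1 a hai⟩
    · intro a t ha
      obtain ⟨i, hai⟩ := Set.mem_iUnion.1 ha
      exact Set.mem_iUnion.2 ⟨i, (hLid i).2.2.2 a t hai⟩
  obtain ⟨GU, hGUeq⟩ := hR U hUid
  have hgU : ∀ g ∈ GU, ∃ n, g ∈ L n := by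
    intro g hg
    have : g ∈ U := hGUeq ▸ my_subset_rIdealGen (↑GU : Set R) hg
    exact Set.mem_iUnion.1 this
  choose nf hnf using hgU
  set N : ℕ := GU.attach.sup fun g => nf g.1 g.2 with hNdef
  have hUN : U ⊆ L N := by
    have hGUN : (↑GU : Set R) ⊆ L N := by
      intro g hg
      exact hLmono (Finset.le_sup (f := fun g : {x // x ∈ GU} => nf g.1 g.2)
        (Finset.mem_attach _ ⟨g, hg⟩)) (hnf g hg)
    rw [hGUeq]
    exact my_rIdealGen_subset (hLid N) hGUN
  -- finite generators for each L n
  choose Gf hGf using fun n => hR (L n) (hLid n)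
  have hGmem : ∀ n, ∀ g ∈ Gf n, g ∈ L n := by
    intro n g hg
    rw [hGf n]
    exact my_subset_rIdealGen _ hg
  have hPex : ∀ n, ∀ g ∈ Gf n, ∃ p, p ∈ I ∧ (∀ j, n < j → co p j = 0) ∧ co p n = g :=
    fun n g hg => hGmem n g hg
  choose P hPI hPhigh hPtop using hPex
  -- the generating finset of S
  set Gs : Finset S :=
    (Finset.range (N + 1)).biUnion (fun n => (Gf n).attach.image fun g => P n g.1 g.2)
    with hGsdef
  have hGsI : (↑Gs : Set S) ⊆ I := by
    intro s hs
    simp only [hGsdef, Finset.coe_biUnion, Finset.coe_image, Set.mem_iUnion,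
      Set.mem_image, Finset.mem_coe, Finset.mem_attach] at hs
    obtain ⟨n, _, g, _, rfl⟩ := hs
    exact hPI n g.1 g.2
  have hPGs : ∀ n, n ≤ N → ∀ g (hg : g ∈ Gf n), P n g hg ∈ Gs := by
    intro n hn g hg
    simp only [hGsdef, Finset.mem_biUnion, Finset.mem_range, Finset.mem_image,
      Finset.mem_attach]
    exact ⟨n, Nat.lt_succ_of_le hn, ⟨g, hg⟩, trivial, rfl⟩
  refine ⟨Gs, Set.Subset.antisymm ?_ (my_rIdealGen_subset hI hGsI)⟩
  set T : Set S := rIdealGen S (↑Gs : Set S) with hTdef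
  have hTid : IsRightIdeal S T := my_isRightIdeal_rIdealGen _
  have hTI : T ⊆ I := my_rIdealGen_subset hI hGsI
  -- main induction on a degree bound
  have main : ∀ d : ℕ, ∀ q, q ∈ I → (∀ j, d ≤ j → co q j = 0) → q ∈ T := by
    intro d
    induction d with
    | zero =>
      intro q hqI h0
      have hc : co q = 0 := Finsupp.ext fun j => h0 j (Nat.zero_le j)
      have : q = 0 := by
        rw [← lpoly_myco f x hbij q]
        show lpoly f x (co q) = 0
        rw [hc]
        exact (myL f x).map_zero
      rw [this]
      exact hTid.1
    | succ d ih =>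
      intro q hqI hhigh
      set a : R := co q d with hadef
      have haLd : a ∈ L d := ⟨q, hqI, fun j hj => hhigh j hj, rfl⟩
      set m : ℕ := min d N with hmdef
      have hmd : m ≤ d := min_le_left d N
      have hmN : m ≤ N := min_le_right d N
      have haLm : a ∈ L m := by
        rcases le_or_gt d N with h | h
        · rw [hmdef, min_eq_left h]; exact haLd
        · rw [hmdef, min_eq_right h.le]
          exact hUN (Set.mem_iUnion.2 ⟨d, haLd⟩)
      set J : Set R := {b | ∃ s, s ∈ T ∧ (∀ j, d < j → co s j = 0) ∧ co s d = b} with hJdef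
      have hJid : IsRightIdeal R J := by
        refine ⟨⟨0, hTid.1, ?_, ?_⟩, ?_, ?_, ?_⟩
        · intro j _; rw [hcodef, myco_zero]; rfl
        · rw [hcodef, myco_zero]; rfl
        · rintro b c ⟨p, hpT, hph, hpt⟩ ⟨p', hp'T, hp'h, hp't⟩
          refine ⟨p + p', hTid.2.1 _ _ hpT hp'T, ?_, ?_⟩
          · intro j hj
            rw [hcodef, myco_add f x hbij]
            show co p j + co p' j = 0
            rw [hph j hj, hp'h j hj, add_zero]
          · rw [hcodef, myco_add f x hbij]
            show co p d + co p' d = b + c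
            rw [hpt, hp't]
        · rintro b ⟨p, hpT, hph, hpt⟩
          refine ⟨0 - p, ?_, ?_, ?_⟩
          · rw [zero_sub]; exact hTid.2.2.1 _ hpT
          · intro j hj
            rw [hcodef, myco_sub f x hbij, myco_zero]
            show (0 : ℕ →₀ R) j - co p j = 0
            rw [hph j hj]; simp
          · rw [hcodef, myco_sub f x hbij, myco_zero]
            show (0 : ℕ →₀ R) d - co p d = -b
            rw [hpt]; simp
        · rintro b t ⟨p, hpT, hph, hpt⟩
          obtain ⟨t', ht'⟩ := (hσsurj.iterate d) t
          obtain ⟨h1, h2⟩ := my_coeff_mul_const f x σ δ hmul hσ0 hδ0 hbij p t' d hph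
          exact ⟨p * f t', hTid.2.2.2 _ _ hpT, h2, by rw [h1, hpt, ht']⟩
      have hGJ : (↑(Gf m) : Set R) ⊆ J := by
        intro g hg
        have hmem : P m g hg ∈ T := my_subset_rIdealGen _ (hPGs m hmN g hg)
        obtain ⟨h1, h2⟩ := my_coeff_mul_pw f x σ δ hmul hσ0 hδ0 hσ1 hδ1 hbij
          (P m g hg) (d - m) m (hPhigh m g hg)
        have hme : m + (d - m) = d := Nat.add_sub_cancel' hmd
        refine ⟨P m g hg * pw x (d - m), hTid.2.2.2 _ _ hmem, ?_, ?_⟩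
        · intro j hj
          exact h2 j (by omega)
        · rw [hme] at h1
          rw [h1, hPtop]
      have hLJ : L m ⊆ J := by
        rw [hGf m]
        exact my_rIdealGen_subset hJid hGJ
      obtain ⟨s, hsT, hsh, hst⟩ := hLJ haLm
      have hqs : q - s ∈ I := hIsub _ _ hqI (hTI hsT)
      have hqsh : ∀ j, d ≤ j → co (q - s) j = 0 := by
        intro j hj
        rw [hcodef, myco_sub f x hbij]
        show co q j - co s j = 0
        rcases eq_or_lt_of_le hj with h | h
        · rw [← h, ← hadef, hst, sub_self]
        · rw [hhigh j h, hsh j h, sub_zero]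
      have hqsT : q - s ∈ T := ih (q - s) hqs hqsh
      have : q = (q - s) + s := (sub_add_cancel q s).symm
      rw [this]
      exact hTid.2.1 _ _ hqsT hsT
  intro q hq
  set d : ℕ := (co q).support.sup id + 1 with hddef
  refine main d q hq ?_
  intro j hj
  by_contra h
  have hjs : j ∈ (co q).support := Finsupp.mem_support_iff.2 h
  have h2 : j ≤ (co q).support.sup id := Finset.le_sup (f := id) hjs
  omega
end
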